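/- Let P_n = {1,...,n} ordered by divisibility, f : P_n → R a function into a commutative ring, and F, G : P_n → R functions with F(1) = G(1) = 1. Define the matrix M with entries M(a,b) = Σ_{c | gcd(a,b)} F(a/c)·f(c)·G(b/c). Then det M = f(1)·f(2)···f(n). -/

import Mathlib

/-!
Writing `L_F` for the matrix `[c ∣ a] F(a/c)`, the entry formula says exactly
`M = L_F · diag(f) · L_Gᵀ`, because `{1,…,n}` contains every divisor of its elements. Since
`c ∣ a` forces `c ≤ a`, each `L_F` is lower triangular with diagonal `F 1 = 1`, so
`det M = det diag(f) = f(1)⋯f(n)`.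
-/

open Finset Matrix

section

variable {R : Type*} [CommRing R]

def dvdMatrix (s : Finset ℕ) (F : ℕ → R) : Matrix s s R :=
  of fun a c => if (c : ℕ) ∣ a then F (a / c) else 0

theorem dvdMatrix_isLowerTriangular {s : Finset ℕ} (h0 : 0 ∉ s) (F : ℕ → R) :
    (dvdMatrix s F).IsLowerTriangular := by
  intro a c hac
  have hac : (a : ℕ) < c := hac
  simp only [dvdMatrix, of_apply, ite_eq_right_iff]
  exact fun hdvd =>
    absurd (Nat.le_of_dvd (Nat.pos_of_ne_zero (ne_of_mem_of_not_mem a.2 h0)) hdvd) hac.not_ge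

theorem det_dvdMatrix {s : Finset ℕ} (h0 : 0 ∉ s) (F : ℕ → R) :
    (dvdMatrix s F).det = F 1 ^ s.card := by
  have hdiag (a : s) : dvdMatrix s F a a = F 1 := by
    simp [dvdMatrix, Nat.div_self (Nat.pos_of_ne_zero (ne_of_mem_of_not_mem a.2 h0))]
  simp [det_of_isLowerTriangular _ (dvdMatrix_isLowerTriangular h0 F), hdiag]

theorem filter_dvd_and_dvd_eq_divisors_gcd {s : Finset ℕ} (hs : ∀ a ∈ s, a.divisors ⊆ s)
    {a : ℕ} (ha : a ∈ s) (ha0 : a ≠ 0) (b : ℕ) :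
    s.filter (fun c => c ∣ a ∧ c ∣ b) = (a.gcd b).divisors := by
  ext c
  simp only [mem_filter, Nat.mem_divisors, Nat.dvd_gcd_iff]
  exact ⟨fun h => ⟨h.2, Nat.gcd_ne_zero_left ha0⟩,
    fun h => ⟨hs a ha (Nat.mem_divisors.2 ⟨h.1.1, ha0⟩), h.1⟩⟩

theorem dvdMatrix_mul_diagonal_mul_transpose {s : Finset ℕ} (h0 : 0 ∉ s)
    (hs : ∀ a ∈ s, a.divisors ⊆ s) (f F G : ℕ → R) :
    dvdMatrix s F * diagonal (fun c : s => f c) * (dvdMatrix s G)ᵀ =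
      of fun a b : s => ∑ c ∈ (Nat.gcd a b).divisors, F ((a : ℕ) / c) * f c * G ((b : ℕ) / c) := by
  ext a b
  rw [mul_apply, of_apply,
    ← filter_dvd_and_dvd_eq_divisors_gcd hs a.2 (ne_of_mem_of_not_mem a.2 h0), sum_filter,
    ← sum_coe_sort s]
  refine sum_congr rfl fun c _ => ?_
  simp only [mul_diagonal, dvdMatrix, of_apply, transpose_apply]
  split_ifs <;> simp_all

end

theorem Nat.divisors_subset_Icc {a n : ℕ} (ha : a ∈ Icc 1 n) : a.divisors ⊆ Icc 1 n :=
  fun _ hc => mem_Icc.2 ⟨Nat.pos_of_mem_divisors hc, (Nat.divisor_le hc).trans (mem_Icc.1 ha).2⟩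

/-- **Daniloff-type determinant.** For `{1,…,n}` ordered by divisibility, `f : ℕ → R`, and
`F, G : ℕ → R` with `F 1 = G 1 = 1`, the matrix with entries
`∑_{c ∣ gcd(a,b)} F(a/c)·f(c)·G(b/c)` has determinant `f(1)⋯f(n)`. -/
theorem det_daniloff {R : Type*} [CommRing R] (n : ℕ) (f F G : ℕ → R)
    (hF : F 1 = 1) (hG : G 1 = 1) :
    Matrix.det (Matrix.of fun a b : Finset.Icc 1 n =>
        ∑ c ∈ (Nat.gcd a b).divisors, F ((a : ℕ) / c) * f c * G ((b : ℕ) / c)) =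
      ∏ a ∈ Finset.Icc 1 n, f a := by
  have h0 : 0 ∉ Icc 1 n := by simp
  rw [← dvdMatrix_mul_diagonal_mul_transpose h0 (fun _ => Nat.divisors_subset_Icc), det_mul,
    det_mul, det_transpose, det_dvdMatrix h0, det_dvdMatrix h0, det_diagonal, hF, hG,
    one_pow, one_mul, mul_one, prod_coe_sort (Icc 1 n) f]
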